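/- In a spider (a tree with exactly one vertex of degree greater than 2), every vertex has an escape path to some leaf; consequently for every k ≥ 1 and every vertex v there is a leaf ℓ with |I^k(v)| ≤ |I^k(ℓ)|. -/

import Mathlib

open scoped Classical

variable {V : Type*}

/-- `P = p 1, p 2, …, p n` is an escape path in `G` (from `p 1` to `p n`):
a path in `G` whose last vertex `p n` has degree 1 and whose vertices
`p i` for `2 ≤ i ≤ n - 2` have degree 2. -/
def IsEscapePath [Fintype V] (G : SimpleGraph V) (n : ℕ) (p : ℕ → V) : Prop :=
  1 ≤ n ∧ Set.InjOn p (Set.Icc 1 n) ∧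
  (∀ i, 1 ≤ i → i < n → G.Adj (p i) (p (i + 1))) ∧
  G.degree (p n) = 1 ∧
  ∀ i, 2 ≤ i → i ≤ n - 2 → G.degree (p i) = 2

/-- The flip of the path `p 1, …, p n`: it maps `p i` to `p (n + 1 - i)` and
fixes every vertex outside the path. -/
noncomputable def flipP (n : ℕ) (p : ℕ → V) : V → V := fun x =>
  if h : ∃ i, 1 ≤ i ∧ i ≤ n ∧ p i = x then p (n + 1 - h.choose) else x

/-- `s` is an independent set of `G`. -/
def IndepSet (G : SimpleGraph V) (s : Set V) : Prop :=
  ∀ x ∈ s, ∀ y ∈ s, x ≠ y → ¬ G.Adj x y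

/-- The star `I^k_G(u)`: the family of independent `k`-subsets of `G`
containing the vertex `u`. -/
noncomputable def star [Fintype V] (G : SimpleGraph V) (k : ℕ) (u : V) :
    Finset (Finset V) :=
  Finset.univ.filter
    (fun A : Finset V => A.card = k ∧ u ∈ A ∧
      ∀ x ∈ A, ∀ y ∈ A, x ≠ y → ¬ G.Adj x y)

/-!
Grow a path from the branch vertex `c` through `v` until its last vertex has no neighbour off
the path. In a tree that last vertex is a leaf `ℓ`, and the part `v = p 1, …, p n = ℓ` after `v`
avoids `c`, so its inner vertices have degree exactly 2. The reflection `p i ↦ p (n + 1 - i)`,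
fixing every other vertex, then maps independent sets through `v` injectively to independent
sets through `ℓ`: the only adjacency it can create is between `p 1` and an outside neighbour of
`v`, and no such neighbour lies in a set containing `v`.
-/

/-- Unlike `IsEscapePath`, this also asks `p (n - 1)` to have degree 2 when `3 ≤ n`; the flip
argument needs it. -/
structure IsPendantPath [Fintype V] (G : SimpleGraph V) (n : ℕ) (p : ℕ → V) : Prop where
  one_le : 1 ≤ n
  injOn : Set.InjOn p (Set.Icc 1 n)
  adj : ∀ i, 1 ≤ i → i < n → G.Adj (p i) (p (i + 1))
  degree_last : G.degree (p n) = 1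
  degree_interior : ∀ i, 2 ≤ i → i < n → G.degree (p i) = 2

namespace IsPendantPath

variable [Fintype V] {G : SimpleGraph V} {n : ℕ} {p : ℕ → V}

theorem isEscapePath (hp : IsPendantPath G n p) : IsEscapePath G n p :=
  ⟨hp.one_le, hp.injOn, hp.adj, hp.degree_last,
    fun i hi hin => hp.degree_interior i hi (by have := hp.one_le; omega)⟩

end IsPendantPath

namespace SimpleGraph

variable {G : SimpleGraph V}

theorem two_le_degree_of_adj [Fintype V] {x y z : V} (hy : G.Adj x y) (hz : G.Adj x z)
    (hyz : y ≠ z) : 2 ≤ G.degree x := by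
  rw [← card_neighborFinset_eq_degree, ← Finset.card_pair hyz]
  exact Finset.card_le_card fun w hw => by
    rcases Finset.mem_insert.1 hw with rfl | hw
    · exact (mem_neighborFinset _ _ _).2 hy
    · exact (Finset.mem_singleton.1 hw) ▸ (mem_neighborFinset _ _ _).2 hz

theorem mem_of_adj_of_subset_neighborFinset [Fintype V] {x y : V} {s : Finset V}
    (hs : s ⊆ G.neighborFinset x) (hcard : G.degree x ≤ s.card) (h : G.Adj x y) : y ∈ s := by
  rw [Finset.eq_of_subset_of_card_le hs (by rwa [card_neighborFinset_eq_degree])]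
  exact (G.mem_neighborFinset x y).2 h

theorem Walk.IsPath.exists_append_forall_adj_mem_support [Finite V] {u v : V}
    {W : G.Walk u v} (hW : W.IsPath) :
    ∃ (w : V) (Q : G.Walk v w), (W.append Q).IsPath ∧
      ∀ y, G.Adj w y → y ∈ (W.append Q).support := by
  have := Fintype.ofFinite V
  induction h : Fintype.card V - W.length using Nat.strong_induction_on generalizing v with
  | _ m ih =>
    by_cases hmax : ∀ y, G.Adj v y → y ∈ W.support
    · exact ⟨v, .nil, by simpa using hW, by simpa using hmax⟩
    obtain ⟨y, hvy, hy⟩ := not_forall₂.1 hmax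
    have hW' : (W.concat hvy).IsPath := hW.concat hy hvy
    have hlt : Fintype.card V - (W.concat hvy).length < m := by
      have := hW'.length_lt
      rw [Walk.length_concat] at this ⊢
      omega
    obtain ⟨w, Q, hQ, hQmax⟩ := ih _ hlt hW' rfl
    rw [Walk.concat_append] at hQ hQmax
    exact ⟨w, .cons hvy Q, hQ, hQmax⟩

theorem IsAcyclic.degree_le_one_of_forall_adj_mem_support [Fintype V] (hG : G.IsAcyclic)
    {u v : V} {W : G.Walk u v} (hW : W.IsPath) (hmax : ∀ y, G.Adj v y → y ∈ W.support) :
    G.degree v ≤ 1 := by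
  rw [← card_neighborFinset_eq_degree, Finset.card_le_one]
  intro a ha b hb
  rw [mem_neighborFinset] at ha hb
  rw [hG.eq_penultimate_of_adj_end hW ha (hmax a ha),
    hG.eq_penultimate_of_adj_end hW hb (hmax b hb)]

theorem Walk.IsPath.two_le_degree_getVert [Fintype V] {v w : V} {Q : G.Walk v w}
    (hQ : Q.IsPath) {i : ℕ} (hi : 0 < i) (hiQ : i < Q.length) : 2 ≤ G.degree (Q.getVert i) := by
  obtain ⟨j, rfl⟩ : ∃ j, i = j + 1 := ⟨i - 1, by omega⟩
  refine two_le_degree_of_adj (Q.adj_getVert_succ (i := j) (by omega)).symm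
    (Q.adj_getVert_succ hiQ) fun h => ?_
  have := hQ.getVert_injOn (show j ≤ Q.length by omega) (show j + 2 ≤ Q.length by omega) h
  omega

theorem Walk.IsPath.isPendantPath [Fintype V] {v w : V} {Q : G.Walk v w} (hQ : Q.IsPath)
    (hw : G.degree w = 1) (hint : ∀ i, 0 < i → i < Q.length → G.degree (Q.getVert i) ≤ 2) :
    IsPendantPath G (Q.length + 1) (fun i => Q.getVert (i - 1)) where
  one_le := by omega
  injOn a ha b hb hab := by
    simp only [Set.mem_Icc] at ha hb
    have := hQ.getVert_injOn (show a - 1 ≤ Q.length by omega) (show b - 1 ≤ Q.length by omega) hab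
    omega
  adj i hi hin := by
    simpa [show i - 1 + 1 = i by omega] using Q.adj_getVert_succ (i := i - 1) (by omega)
  degree_last := by rw [Nat.add_sub_cancel, Walk.getVert_length, hw]
  degree_interior i hi hin :=
    le_antisymm (hint _ (by omega) (by omega)) (hQ.two_le_degree_getVert (by omega) (by omega))

theorem IsTree.exists_isPendantPath [Fintype V] (hT : G.IsTree) {c : V} (hc : 0 < G.degree c)
    (hcuniq : ∀ w : V, 3 ≤ G.degree w → w = c) (v : V) :
    ∃ (n : ℕ) (p : ℕ → V), IsPendantPath G n p ∧ p 1 = v := by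
  obtain ⟨T, hT_path⟩ := hT.connected.exists_isPath c v
  obtain ⟨w, Q, hW, hmax⟩ := hT_path.exists_append_forall_adj_mem_support
  have hQ_ne : ∀ i, 0 < i → i ≤ Q.length → Q.getVert i ≠ c := fun i hi hiQ hic => by
    have h : T.length + i = 0 := hW.getVert_injOn
      (show T.length + i ≤ (T.append Q).length by rw [Walk.length_append]; omega) (by simp)
      (by simpa [Walk.getVert_append] using hic)
    omega
  have hw_pos : 0 < G.degree w := by
    by_cases hwc : w = c
    · exact hwc ▸ hc
    · exact (G.degree_pos_iff_exists_adj w).2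
        ⟨_, ((T.append Q).adj_penultimate (Walk.not_nil_of_ne (Ne.symm hwc))).symm⟩
  have hw : G.degree w = 1 :=
    le_antisymm (hT.isAcyclic.degree_le_one_of_forall_adj_mem_support hW hmax) hw_pos
  refine ⟨_, _, hW.of_append_right.isPendantPath hw fun i hi hiQ => ?_, by simp⟩
  by_contra! h
  exact hQ_ne i hi hiQ.le (hcuniq _ h)

end SimpleGraph

section flipP

variable {n : ℕ} {p : ℕ → V}

theorem flipP_apply_of_injOn (hinj : Set.InjOn p (Set.Icc 1 n)) {i : ℕ} (hi : i ∈ Set.Icc 1 n) :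
    flipP n p (p i) = p (n + 1 - i) := by
  have hex : ∃ j, 1 ≤ j ∧ j ≤ n ∧ p j = p i := ⟨i, hi.1, hi.2, rfl⟩
  obtain ⟨h1, h2, hj⟩ := hex.choose_spec
  rw [flipP, dif_pos hex, hinj ⟨h1, h2⟩ hi hj]

theorem flipP_apply_of_not_exists {x : V} (hx : ¬∃ i, 1 ≤ i ∧ i ≤ n ∧ p i = x) :
    flipP n p x = x := by
  rw [flipP, dif_neg hx]

theorem flipP_involutive (hinj : Set.InjOn p (Set.Icc 1 n)) : Function.Involutive (flipP n p) := by
  intro x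
  by_cases hx : ∃ i, 1 ≤ i ∧ i ≤ n ∧ p i = x
  · obtain ⟨i, hi1, hin, rfl⟩ := hx
    rw [flipP_apply_of_injOn hinj ⟨hi1, hin⟩, flipP_apply_of_injOn hinj ⟨by omega, by omega⟩,
      show n + 1 - (n + 1 - i) = i by omega]
  · rw [flipP_apply_of_not_exists hx, flipP_apply_of_not_exists hx]

end flipP

theorem mem_star [Fintype V] {G : SimpleGraph V} {k : ℕ} {u : V} {A : Finset V} :
    A ∈ star G k u ↔ A.card = k ∧ u ∈ A ∧ IndepSet G A := by
  simp [_root_.star, IndepSet]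

namespace IsPendantPath

variable [Fintype V] {G : SimpleGraph V} {n : ℕ} {p : ℕ → V}

theorem exists_index_of_adj (hp : IsPendantPath G n p) {m : ℕ} (hm : 2 ≤ m) (hmn : m ≤ n)
    {y : V} (h : G.Adj (p m) y) : ∃ j, 1 ≤ j ∧ j ≤ n ∧ p j = y ∧ (j + 1 = m ∨ j = m + 1) := by
  have hprev : G.Adj (p m) (p (m - 1)) := by
    simpa [show m - 1 + 1 = m by omega] using (hp.adj (m - 1) (by omega) (by omega)).symm
  rcases hmn.lt_or_eq with hmn | rfl
  · have hne : p (m - 1) ≠ p (m + 1) := fun h => by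
      have := hp.injOn ⟨by omega, by omega⟩ ⟨by omega, by omega⟩ h
      omega
    have hs : {p (m - 1), p (m + 1)} ⊆ G.neighborFinset (p m) := by
      simp [Finset.insert_subset_iff, hprev, hp.adj m (by omega) hmn]
    have := G.mem_of_adj_of_subset_neighborFinset hs
      (by rw [hp.degree_interior m hm hmn, Finset.card_pair hne]) h
    rcases Finset.mem_insert.1 this with rfl | hy
    · exact ⟨m - 1, by omega, by omega, rfl, by omega⟩
    · exact ⟨m + 1, by omega, hmn, (Finset.mem_singleton.1 hy).symm, by omega⟩
  · have hs : {p (m - 1)} ⊆ G.neighborFinset (p m) := by simp [hprev]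
    have := G.mem_of_adj_of_subset_neighborFinset hs (by simp [hp.degree_last]) h
    exact ⟨m - 1, by omega, by omega, (Finset.mem_singleton.1 this).symm, by omega⟩

theorem succ_eq_or_eq_succ_of_adj (hp : IsPendantPath G n p) {a b : ℕ} (ha : a ∈ Set.Icc 1 n)
    (hb : b ∈ Set.Icc 1 n) (h : G.Adj (p a) (p b)) : a + 1 = b ∨ b + 1 = a := by
  have key : ∀ {a b}, a ∈ Set.Icc 1 n → b ∈ Set.Icc 2 n → G.Adj (p a) (p b) →
      a + 1 = b ∨ b + 1 = a := fun ha hb h => by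
    obtain ⟨j, hj1, hjn, hja, hj⟩ := hp.exists_index_of_adj hb.1 hb.2 h.symm
    rw [← hp.injOn ⟨hj1, hjn⟩ ha hja]
    omega
  by_cases hb2 : 2 ≤ b
  · exact key ha ⟨hb2, hb.2⟩ h
  by_cases ha2 : 2 ≤ a
  · exact (key hb ⟨ha2, ha.2⟩ h.symm).symm
  · obtain rfl : a = b := by simp only [Set.mem_Icc] at ha hb; omega
    exact (G.irrefl h).elim

theorem adj_or_of_adj_flipP (hp : IsPendantPath G n p) {i : ℕ} (hi : i ∈ Set.Icc 1 n) {y : V}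
    (h : G.Adj (flipP n p (p i)) (flipP n p y)) : G.Adj (p i) y ∨ i = n ∧ G.Adj (p 1) y := by
  rw [flipP_apply_of_injOn hp.injOn hi] at h
  obtain ⟨hi1, hin⟩ := hi
  by_cases hy : ∃ j, 1 ≤ j ∧ j ≤ n ∧ p j = y
  · obtain ⟨j, hj1, hjn, rfl⟩ := hy
    rw [flipP_apply_of_injOn hp.injOn ⟨hj1, hjn⟩] at h
    left
    rcases hp.succ_eq_or_eq_succ_of_adj ⟨by omega, by omega⟩ ⟨by omega, by omega⟩ h with hij | hij
    · simpa [show i = j + 1 by omega] using (hp.adj j hj1 (by omega)).symm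
    · simpa [show j = i + 1 by omega] using hp.adj i hi1 (by omega)
  · rw [flipP_apply_of_not_exists hy] at h
    by_cases hin' : i = n
    · exact .inr ⟨hin', by simpa [hin'] using h⟩
    · obtain ⟨j, hj1, hjn, hjy, -⟩ := hp.exists_index_of_adj (by omega) (by omega) h
      exact absurd ⟨j, hj1, hjn, hjy⟩ hy

theorem indepSet_image_flipP (hp : IsPendantPath G n p) {s : Set V} (hs : IndepSet G s)
    (h1 : p 1 ∈ s) : IndepSet G (flipP n p '' s) := by
  have key : ∀ i ∈ Set.Icc 1 n, p i ∈ s → ∀ y ∈ s, p i ≠ y →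
      ¬G.Adj (flipP n p (p i)) (flipP n p y) := fun i hi hpi y hy hne h => by
    rcases hp.adj_or_of_adj_flipP hi h with h | ⟨-, h⟩
    · exact hs _ hpi _ hy hne h
    · exact hs _ h1 _ hy h.ne h
  rintro _ ⟨x, hx, rfl⟩ _ ⟨y, hy, rfl⟩ hne h
  have hne : x ≠ y := fun hxy => hne (congrArg _ hxy)
  by_cases hxp : ∃ i, 1 ≤ i ∧ i ≤ n ∧ p i = x
  · obtain ⟨i, hi1, hin, rfl⟩ := hxp
    exact key i ⟨hi1, hin⟩ hx y hy hne h
  by_cases hyp : ∃ j, 1 ≤ j ∧ j ≤ n ∧ p j = y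
  · obtain ⟨j, hj1, hjn, rfl⟩ := hyp
    exact key j ⟨hj1, hjn⟩ hy x hx hne.symm h.symm
  rw [flipP_apply_of_not_exists hxp, flipP_apply_of_not_exists hyp] at h
  exact hs x hx y hy hne h

theorem card_star_le (hp : IsPendantPath G n p) (k : ℕ) :
    (star G k (p 1)).card ≤ (star G k (p n)).card := by
  have hinj := (flipP_involutive hp.injOn).injective
  refine Finset.card_le_card_of_injOn (Finset.image (flipP n p)) (fun A hA => ?_)
    ((Finset.image_injective hinj).injOn)
  rw [Finset.mem_coe, mem_star] at hA ⊢
  obtain ⟨hcard, h1, hind⟩ := hA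
  refine ⟨by rw [Finset.card_image_of_injective _ hinj, hcard], Finset.mem_image.2 ⟨p 1, h1, ?_⟩,
    by simpa using hp.indepSet_image_flipP hind h1⟩
  rw [flipP_apply_of_injOn hp.injOn ⟨le_rfl, hp.one_le⟩, Nat.add_sub_cancel]

end IsPendantPath

/-- in a spider (a tree with exactly one vertex of degree at least 3),
every vertex has an escape path to some leaf; consequently for every `k ≥ 1` and
every vertex `v` there is a leaf `ℓ` with `|I^k(v)| ≤ |I^k(ℓ)|`. -/
theorem spider_HK [Fintype V] (G : SimpleGraph V) (hT : G.IsTree)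
    (c : V) (hc : 3 ≤ G.degree c) (hcuniq : ∀ w : V, 3 ≤ G.degree w → w = c) :
    (∀ v : V, ∃ (n : ℕ) (p : ℕ → V) (ℓ : V), G.degree ℓ = 1 ∧
        IsEscapePath G n p ∧ p 1 = v ∧ p n = ℓ) ∧
      ∀ k : ℕ, 1 ≤ k → ∀ v : V, ∃ ℓ : V, G.degree ℓ = 1 ∧
        (star G k v).card ≤ (star G k ℓ).card := by
  have hpendant := hT.exists_isPendantPath (by omega) hcuniq
  refine ⟨fun v => ?_, fun k _ v => ?_⟩ <;> obtain ⟨n, p, hp, rfl⟩ := hpendant v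
  · exact ⟨n, p, p n, hp.degree_last, hp.isEscapePath, rfl, rfl⟩
  · exact ⟨p n, hp.degree_last, hp.card_star_le k⟩
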